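/- (Suboptimality of the greedy policy of an approximate Q-function via the performance difference lemma.) In a finite discounted MDP with |r(s,a)| ≤ Rmax for all (s,a), let π* be a stationary deterministic optimal policy, i.e., V^{π*}(s) = V*(s) for all s ∈ S, and let Q^{π*}(s,a) = r(s,a) + γ·Σ_{s'} p(s'|s,a)·V^{π*}(s'). Let Q : S×A → ℝ be any function and let π̂ be a stationary deterministic greedy policy with respect to Q, i.e., π̂(s) ∈ argmax_{a∈A} Q(s,a) for every s. Then for every start state s0, V*(s0) − V^{π̂}(s0) ≤ Σ_{t=0}^∞ γ^t Σ_s d_t^{π̂,s0}(s)·[ |Q^{π*}(s,π*(s)) − Q(s,π*(s))| + |Q^{π*}(s,π̂(s)) − Q(s,π̂(s))| ]. -/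
import Mathlib


/-- State distribution at time `t` of a (possibly non-stationary) deterministic policy `π`
started from `s0`, under transition model `N`. -/
noncomputable def stateDist {S A : Type*} [Fintype S] [DecidableEq S]
    (N : S → A → S → ℝ) (π : ℕ → S → A) (s0 : S) : ℕ → S → ℝ
  | 0 => fun s => if s = s0 then 1 else 0
  | t + 1 => fun s' => ∑ s : S, stateDist N π s0 t s * N s (π t s) s'

/-- Discounted value of a (possibly non-stationary) deterministic policy. -/
noncomputable def value {S A : Type*} [Fintype S] [DecidableEq S]
    (p : S → A → S → ℝ) (r : S → A → ℝ) (γ : ℝ) (π : ℕ → S → A) (s0 : S) : ℝ :=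
  ∑' t : ℕ, γ ^ t * ∑ s : S, stateDist p π s0 t s * r s (π t s)

/-- Optimal value function: supremum of values over all deterministic policies. -/
noncomputable def vStar {S A : Type*} [Fintype S] [DecidableEq S]
    (p : S → A → S → ℝ) (r : S → A → ℝ) (γ : ℝ) (s0 : S) : ℝ :=
  ⨆ π : ℕ → S → A, value p r γ π s0

section Aux
variable {S A : Type*} [Fintype S] [DecidableEq S]
variable (p : S → A → S → ℝ)

lemma stateDist_nonneg (hp : ∀ s a s', 0 ≤ p s a s') (π : ℕ → S → A) (s0 : S) :
    ∀ t s, 0 ≤ stateDist p π s0 t s := by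
  intro t
  induction t with
  | zero => intro s; simp only [stateDist]; split_ifs <;> norm_num
  | succ t ih =>
      intro s
      simp only [stateDist]
      exact Finset.sum_nonneg fun s' _ => mul_nonneg (ih s') (hp _ _ _)

lemma stateDist_sum_one (hp_sum : ∀ s a, ∑ s' : S, p s a s' = 1) (π : ℕ → S → A) (s0 : S) :
    ∀ t, ∑ s : S, stateDist p π s0 t s = 1 := by
  intro t
  induction t with
  | zero => simp [stateDist]
  | succ t ih =>
      simp only [stateDist]
      rw [Finset.sum_comm]
      simp only [← Finset.mul_sum, hp_sum, mul_one]
      exact ih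

lemma stateDist_succ (π : ℕ → S → A) (s0 : S) (t : ℕ) (s' : S) :
    stateDist p π s0 (t + 1) s' = ∑ s : S, stateDist p π s0 t s * p s (π t s) s' := by
  simp only [stateDist]

lemma stateDist_succ_stationary (π : S → A) (s0 : S) :
    ∀ (t : ℕ) (s : S), stateDist p (fun _ => π) s0 (t + 1) s
      = ∑ s1 : S, p s0 (π s0) s1 * stateDist p (fun _ => π) s1 t s := by
  intro t
  induction t with
  | zero => intro s; simp [stateDist, eq_comm]
  | succ t ih =>
      intro s
      rw [stateDist_succ]
      calc ∑ s' : S, stateDist p (fun _ => π) s0 (t + 1) s' * p s' (π s') s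
          = ∑ s' : S, (∑ s1 : S, p s0 (π s0) s1 * stateDist p (fun _ => π) s1 t s')
              * p s' (π s') s := by
            refine Finset.sum_congr rfl fun s' _ => ?_; rw [ih]
        _ = ∑ s1 : S, p s0 (π s0) s1
              * ∑ s' : S, stateDist p (fun _ => π) s1 t s' * p s' (π s') s := by
            simp only [Finset.sum_mul, Finset.mul_sum]
            rw [Finset.sum_comm]
            exact Finset.sum_congr rfl fun s1 _ => Finset.sum_congr rfl fun s' _ => by ring
        _ = ∑ s1 : S, p s0 (π s0) s1 * stateDist p (fun _ => π) s1 (t + 1) s := by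
            refine Finset.sum_congr rfl fun s1 _ => ?_
            rw [stateDist_succ]

lemma abs_sum_dist_mul_le (hp : ∀ s a s', 0 ≤ p s a s')
    (hp_sum : ∀ s a, ∑ s' : S, p s a s' = 1)
    (π : ℕ → S → A) (s0 : S) (t : ℕ) (f : S → ℝ) (C : ℝ) (hf : ∀ s, |f s| ≤ C) :
    |∑ s : S, stateDist p π s0 t s * f s| ≤ C := by
  calc |∑ s : S, stateDist p π s0 t s * f s|
      ≤ ∑ s : S, |stateDist p π s0 t s * f s| := Finset.abs_sum_le_sum_abs _ _
    _ = ∑ s : S, stateDist p π s0 t s * |f s| := by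
        refine Finset.sum_congr rfl fun s _ => ?_
        rw [abs_mul, abs_of_nonneg (stateDist_nonneg p hp π s0 t s)]
    _ ≤ ∑ s : S, stateDist p π s0 t s * C := by
        refine Finset.sum_le_sum fun s _ => ?_
        exact mul_le_mul_of_nonneg_left (hf s) (stateDist_nonneg p hp π s0 t s)
    _ = C := by rw [← Finset.sum_mul, stateDist_sum_one p hp_sum, one_mul]

lemma summable_geom_of_bound {γ : ℝ} (hγ0 : 0 ≤ γ) (hγ1 : γ < 1)
    (f : ℕ → ℝ) (C : ℝ) (hf : ∀ t, |f t| ≤ C) :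
    Summable (fun t => γ ^ t * f t) := by
  apply Summable.of_norm
  have hg : Summable (fun t : ℕ => γ ^ t * C) :=
    (summable_geometric_of_lt_one hγ0 hγ1).mul_right C
  refine Summable.of_nonneg_of_le (fun t => norm_nonneg _) (fun t => ?_) hg
  rw [Real.norm_eq_abs, abs_mul, abs_of_nonneg (pow_nonneg hγ0 t)]
  exact mul_le_mul_of_nonneg_left (hf t) (pow_nonneg hγ0 t)

end Aux

section Aux2
variable {S A : Type*} [Fintype S] [DecidableEq S]
variable (p : S → A → S → ℝ) (r : S → A → ℝ) {γ Rmax : ℝ}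

lemma value_term_summable (hp : ∀ s a s', 0 ≤ p s a s')
    (hp_sum : ∀ s a, ∑ s' : S, p s a s' = 1)
    (hγ0 : 0 ≤ γ) (hγ1 : γ < 1) (hr : ∀ s a, |r s a| ≤ Rmax)
    (π : ℕ → S → A) (s0 : S) :
    Summable (fun t => γ ^ t * ∑ s : S, stateDist p π s0 t s * r s (π t s)) := by
  refine summable_geom_of_bound hγ0 hγ1 _ Rmax fun t => ?_
  exact abs_sum_dist_mul_le p hp hp_sum π s0 t _ Rmax (fun s => hr s _)

lemma abs_tsum_le_of_geom_bound {γ C : ℝ} (hγ0 : 0 ≤ γ) (hγ1 : γ < 1) (f : ℕ → ℝ)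
    (hf : ∀ t, |f t| ≤ γ ^ t * C) : |∑' t, f t| ≤ C / (1 - γ) := by
  have hgeo : Summable (fun t : ℕ => γ ^ t * C) :=
    (summable_geometric_of_lt_one hγ0 hγ1).mul_right C
  have hsum : Summable f := by
    apply Summable.of_norm
    exact Summable.of_nonneg_of_le (fun t => norm_nonneg _) (fun t => hf t) hgeo
  have habs : Summable (fun t => |f t|) := hsum.abs
  have hnorm : Summable fun t => ‖f t‖ := by simpa only [Real.norm_eq_abs] using habs
  have h := norm_tsum_le_tsum_norm hnorm
  simp only [Real.norm_eq_abs] at h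
  calc |∑' t, f t| ≤ ∑' t, |f t| := h
    _ ≤ ∑' t : ℕ, γ ^ t * C := Summable.tsum_le_tsum hf habs hgeo
    _ = C / (1 - γ) := by
        rw [tsum_mul_right, tsum_geometric_of_lt_one hγ0 hγ1, div_eq_mul_inv]; ring

lemma abs_value_le (hp : ∀ s a s', 0 ≤ p s a s')
    (hp_sum : ∀ s a, ∑ s' : S, p s a s' = 1)
    (hγ0 : 0 ≤ γ) (hγ1 : γ < 1) (hr : ∀ s a, |r s a| ≤ Rmax)
    (π : ℕ → S → A) (s0 : S) :
    |value p r γ π s0| ≤ Rmax / (1 - γ) := by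
  refine abs_tsum_le_of_geom_bound hγ0 hγ1 _ fun t => ?_
  rw [abs_mul, abs_of_nonneg (pow_nonneg hγ0 t)]
  exact mul_le_mul_of_nonneg_left
    (abs_sum_dist_mul_le p hp hp_sum π s0 t _ Rmax (fun s => hr s _))
    (pow_nonneg hγ0 t)

lemma value_bellman (hp : ∀ s a s', 0 ≤ p s a s')
    (hp_sum : ∀ s a, ∑ s' : S, p s a s' = 1)
    (hγ0 : 0 ≤ γ) (hγ1 : γ < 1) (hr : ∀ s a, |r s a| ≤ Rmax)
    (π : S → A) (s0 : S) :
    value p r γ (fun _ => π) s0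
      = r s0 (π s0) + γ * ∑ s1 : S, p s0 (π s0) s1 * value p r γ (fun _ => π) s1 := by
  have hsum := value_term_summable p r hp hp_sum hγ0 hγ1 hr (fun _ => π) s0
  rw [value, Summable.tsum_eq_zero_add hsum]
  have h0 : γ ^ 0 * ∑ s : S, stateDist p (fun _ => π) s0 0 s * r s (π s) = r s0 (π s0) := by
    simp [stateDist, eq_comm]
  rw [h0]
  congr 1
  have hterm : ∀ t : ℕ,
      γ ^ (t + 1) * ∑ s : S, stateDist p (fun _ => π) s0 (t + 1) s * r s (π s)
        = ∑ s1 : S, γ * (p s0 (π s0) s1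
            * (γ ^ t * ∑ s : S, stateDist p (fun _ => π) s1 t s * r s (π s))) := by
    intro t
    simp only [stateDist_succ_stationary p π s0 t, Finset.sum_mul]
    rw [Finset.sum_comm, Finset.mul_sum]
    refine Finset.sum_congr rfl fun s1 _ => ?_
    simp only [Finset.mul_sum]
    refine Finset.sum_congr rfl fun s _ => ?_
    rw [pow_succ]
    ring
  calc (∑' t : ℕ, γ ^ (t + 1) * ∑ s : S, stateDist p (fun _ => π) s0 (t + 1) s * r s (π s))
      = ∑' t : ℕ, ∑ s1 : S, γ * (p s0 (π s0) s1
          * (γ ^ t * ∑ s : S, stateDist p (fun _ => π) s1 t s * r s (π s))) := by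
        exact tsum_congr hterm
    _ = ∑ s1 : S, ∑' t : ℕ, γ * (p s0 (π s0) s1
          * (γ ^ t * ∑ s : S, stateDist p (fun _ => π) s1 t s * r s (π s))) := by
        refine Summable.tsum_finsetSum fun s1 _ => ?_
        exact (((value_term_summable p r hp hp_sum hγ0 hγ1 hr (fun _ => π) s1).mul_left
          (p s0 (π s0) s1)).mul_left γ)
    _ = γ * ∑ s1 : S, p s0 (π s0) s1 * value p r γ (fun _ => π) s1 := by
        rw [Finset.mul_sum]
        refine Finset.sum_congr rfl fun s1 _ => ?_
        rw [tsum_mul_left, tsum_mul_left, value]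


omit [DecidableEq S] in
lemma abs_sum_weight_mul_le (w : S → ℝ) (hw : ∀ s, 0 ≤ w s) (hw1 : ∑ s : S, w s = 1)
    (f : S → ℝ) (C : ℝ) (hf : ∀ s, |f s| ≤ C) : |∑ s : S, w s * f s| ≤ C := by
  calc |∑ s : S, w s * f s| ≤ ∑ s : S, |w s * f s| := Finset.abs_sum_le_sum_abs _ _
    _ = ∑ s : S, w s * |f s| := by
        refine Finset.sum_congr rfl fun s _ => ?_
        rw [abs_mul, abs_of_nonneg (hw s)]
    _ ≤ ∑ s : S, w s * C := by
        refine Finset.sum_le_sum fun s _ => ?_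
        exact mul_le_mul_of_nonneg_left (hf s) (hw s)
    _ = C := by rw [← Finset.sum_mul, hw1, one_mul]

lemma telescope (γ : ℝ) (π : S → A) (V : S → ℝ) (s0 : S) : ∀ T : ℕ,
    ∑ t ∈ Finset.range T, γ ^ t * ∑ s : S, stateDist p (fun _ => π) s0 t s
        * (V s - γ * ∑ s' : S, p s (π s) s' * V s')
      = V s0 - γ ^ T * ∑ s : S, stateDist p (fun _ => π) s0 T s * V s := by
  intro T
  induction T with
  | zero => simp [stateDist, eq_comm]
  | succ T ih =>
      rw [Finset.sum_range_succ, ih]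
      have key : ∑ s : S, stateDist p (fun _ => π) s0 (T + 1) s * V s
          = ∑ s : S, stateDist p (fun _ => π) s0 T s * ∑ s' : S, p s (π s) s' * V s' := by
        simp only [stateDist_succ, Finset.sum_mul]
        rw [Finset.sum_comm]
        refine Finset.sum_congr rfl fun s _ => ?_
        rw [Finset.mul_sum]
        exact Finset.sum_congr rfl fun s' _ => by ring
      have split : ∑ s : S, stateDist p (fun _ => π) s0 T s
              * (V s - γ * ∑ s' : S, p s (π s) s' * V s')
          = (∑ s : S, stateDist p (fun _ => π) s0 T s * V s)
            - γ * ∑ s : S, stateDist p (fun _ => π) s0 T s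
                * ∑ s' : S, p s (π s) s' * V s' := by
        rw [Finset.mul_sum, ← Finset.sum_sub_distrib]
        exact Finset.sum_congr rfl fun s _ => by ring
      rw [key, split, pow_succ]
      ring

lemma pdl (hp : ∀ s a s', 0 ≤ p s a s')
    (hp_sum : ∀ s a, ∑ s' : S, p s a s' = 1)
    (hγ0 : 0 ≤ γ) (hγ1 : γ < 1)
    (π : S → A) (V : S → ℝ) (B : ℝ) (hV : ∀ s, |V s| ≤ B) (s0 : S) :
    ∑' t : ℕ, γ ^ t * ∑ s : S, stateDist p (fun _ => π) s0 t s
        * (V s - γ * ∑ s' : S, p s (π s) s' * V s')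
      = V s0 := by
  have hbra : ∀ s : S, |V s - γ * ∑ s' : S, p s (π s) s' * V s'| ≤ B + γ * B := by
    intro s
    have hW : |∑ s' : S, p s (π s) s' * V s'| ≤ B :=
      abs_sum_weight_mul_le (fun s' => p s (π s) s') (fun s' => hp _ _ _) (hp_sum s (π s)) V B hV
    calc |V s - γ * ∑ s' : S, p s (π s) s' * V s'|
        ≤ |V s| + |γ * ∑ s' : S, p s (π s) s' * V s'| := abs_sub _ _
      _ ≤ B + γ * B := by
          refine add_le_add (hV s) ?_
          rw [abs_mul, abs_of_nonneg hγ0]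
          exact mul_le_mul_of_nonneg_left hW hγ0
  have hsum : Summable (fun t => γ ^ t * ∑ s : S, stateDist p (fun _ => π) s0 t s
      * (V s - γ * ∑ s' : S, p s (π s) s' * V s')) := by
    refine summable_geom_of_bound hγ0 hγ1 _ (B + γ * B) fun t => ?_
    exact abs_sum_weight_mul_le _ (fun s => stateDist_nonneg p hp _ s0 t s)
      (stateDist_sum_one p hp_sum _ s0 t) _ _ hbra
  have hten := hsum.hasSum.tendsto_sum_nat
  have hten' : Filter.Tendsto
      (fun T => V s0 - γ ^ T * ∑ s : S, stateDist p (fun _ => π) s0 T s * V s)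
      Filter.atTop (nhds (∑' t : ℕ, γ ^ t * ∑ s : S, stateDist p (fun _ => π) s0 t s
        * (V s - γ * ∑ s' : S, p s (π s) s' * V s'))) :=
    hten.congr (fun T => telescope p γ π V s0 T)
  have htail : Filter.Tendsto
      (fun T => γ ^ T * ∑ s : S, stateDist p (fun _ => π) s0 T s * V s)
      Filter.atTop (nhds 0) := by
    have hlimg : Filter.Tendsto (fun T : ℕ => γ ^ T * B) Filter.atTop (nhds 0) := by
      simpa using (tendsto_pow_atTop_nhds_zero_of_lt_one hγ0 hγ1).mul_const B
    refine squeeze_zero_norm (fun T => ?_) hlimg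
    rw [Real.norm_eq_abs, abs_mul, abs_of_nonneg (pow_nonneg hγ0 T)]
    exact mul_le_mul_of_nonneg_left
      (abs_sum_weight_mul_le _ (fun s => stateDist_nonneg p hp _ s0 T s)
        (stateDist_sum_one p hp_sum _ s0 T) V B hV) (pow_nonneg hγ0 T)
  have hlim : Filter.Tendsto
      (fun T => V s0 - γ ^ T * ∑ s : S, stateDist p (fun _ => π) s0 T s * V s)
      Filter.atTop (nhds (V s0)) := by
    simpa using (tendsto_const_nhds (x := V s0)).sub htail
  exact tendsto_nhds_unique hten' hlim

end Aux2

/-- Suboptimality of the greedy policy with respect to an approximate Q-function, via the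
performance difference lemma. -/
theorem greedy_q_suboptimality_performance_difference
    {S A : Type*} [Fintype S] [DecidableEq S] [Nonempty S] [Fintype A] [Nonempty A]
    (p : S → A → S → ℝ) (r : S → A → ℝ) (γ Rmax : ℝ)
    (hp_nonneg : ∀ s a s', 0 ≤ p s a s')
    (hp_sum : ∀ s a, ∑ s' : S, p s a s' = 1)
    (hγ0 : 0 < γ) (hγ1 : γ < 1)
    (hr : ∀ s a, |r s a| ≤ Rmax)
    (πstar : S → A)
    (hπstar : ∀ s, value p r γ (fun _ => πstar) s = vStar p r γ s)
    (Qπstar : S → A → ℝ)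
    (hQπstar : ∀ s a, Qπstar s a =
      r s a + γ * ∑ s' : S, p s a s' * value p r γ (fun _ => πstar) s')
    (Q : S → A → ℝ) (πhat : S → A)
    (hgreedy : ∀ s a, Q s a ≤ Q s (πhat s))
    (s0 : S) :
    vStar p r γ s0 - value p r γ (fun _ => πhat) s0 ≤
      ∑' t : ℕ, γ ^ t * ∑ s : S, stateDist p (fun _ => πhat) s0 t s *
        (|Qπstar s (πstar s) - Q s (πstar s)| + |Qπstar s (πhat s) - Q s (πhat s)|) := by
  set V : S → ℝ := fun s => value p r γ (fun _ => πstar) s with hVdef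
  have hγ0' : (0:ℝ) ≤ γ := le_of_lt hγ0
  have hB : ∀ s, |V s| ≤ Rmax / (1 - γ) := fun s =>
    abs_value_le p r hp_nonneg hp_sum hγ0' hγ1 hr (fun _ => πstar) s
  set B : ℝ := Rmax / (1 - γ) with hBdef
  -- the performance-difference sum
  have hpdl := pdl p hp_nonneg hp_sum hγ0' hγ1 πhat V B hB s0
  set a : ℕ → ℝ := fun t => γ ^ t * ∑ s : S, stateDist p (fun _ => πhat) s0 t s
      * r s (πhat s) with hadef
  set f : ℕ → ℝ := fun t => γ ^ t * ∑ s : S, stateDist p (fun _ => πhat) s0 t s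
      * (V s - γ * ∑ s' : S, p s (πhat s) s' * V s') with hfdef
  set e : ℕ → ℝ := fun t => γ ^ t * ∑ s : S, stateDist p (fun _ => πhat) s0 t s
      * (V s - r s (πhat s) - γ * ∑ s' : S, p s (πhat s) s' * V s') with hedef
  have ha : Summable a :=
    value_term_summable p r hp_nonneg hp_sum hγ0' hγ1 hr (fun _ => πhat) s0
  have hf : Summable f := by
    refine summable_geom_of_bound hγ0' hγ1 _ (B + γ * B) fun t => ?_
    refine abs_sum_weight_mul_le _ (fun s => stateDist_nonneg p hp_nonneg _ s0 t s)
      (stateDist_sum_one p hp_sum _ s0 t) _ _ fun s => ?_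
    have hW : |∑ s' : S, p s (πhat s) s' * V s'| ≤ B :=
      abs_sum_weight_mul_le (fun s' => p s (πhat s) s') (fun s' => hp_nonneg _ _ _)
        (hp_sum s (πhat s)) V B hB
    calc |V s - γ * ∑ s' : S, p s (πhat s) s' * V s'|
        ≤ |V s| + |γ * ∑ s' : S, p s (πhat s) s' * V s'| := abs_sub _ _
      _ ≤ B + γ * B := by
          refine add_le_add (hB s) ?_
          rw [abs_mul, abs_of_nonneg hγ0']
          exact mul_le_mul_of_nonneg_left hW hγ0'
  have hfe : ∀ t, f t = a t + e t := by
    intro t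
    rw [hadef, hedef, hfdef]
    simp only
    rw [← mul_add, ← Finset.sum_add_distrib]
    refine congrArg _ (Finset.sum_congr rfl fun s _ => by ring)
  have he : Summable e := (hf.sub ha).congr fun t => by rw [hfe t]; ring
  have hval : value p r γ (fun _ => πhat) s0 = ∑' t, a t := rfl
  have hsplit : V s0 = (∑' t, a t) + ∑' t, e t := by
    rw [← hpdl]
    calc ∑' t, f t = ∑' t, (a t + e t) := tsum_congr hfe
      _ = (∑' t, a t) + ∑' t, e t := Summable.tsum_add ha he
  have hgoal1 : vStar p r γ s0 - value p r γ (fun _ => πhat) s0 = ∑' t, e t := by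
    rw [← hπstar s0, hval]
    have : value p r γ (fun _ => πstar) s0 = V s0 := rfl
    rw [this, hsplit]; ring
  rw [hgoal1]
  -- termwise comparison
  set c : S → ℝ := fun s => |Qπstar s (πstar s) - Q s (πstar s)|
      + |Qπstar s (πhat s) - Q s (πhat s)| with hcdef
  have hc_nonneg : ∀ s, 0 ≤ c s := fun s => add_nonneg (abs_nonneg _) (abs_nonneg _)
  obtain ⟨C, hC⟩ : ∃ C : ℝ, ∀ s, c s ≤ C :=
    ⟨Finset.univ.sup' Finset.univ_nonempty c, fun s => Finset.le_sup' c (Finset.mem_univ s)⟩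
  have hrhs : Summable (fun t => γ ^ t * ∑ s : S, stateDist p (fun _ => πhat) s0 t s * c s) := by
    refine summable_geom_of_bound hγ0' hγ1 _ C fun t => ?_
    refine abs_sum_weight_mul_le _ (fun s => stateDist_nonneg p hp_nonneg _ s0 t s)
      (stateDist_sum_one p hp_sum _ s0 t) _ _ fun s => ?_
    rw [abs_of_nonneg (hc_nonneg s)]
    exact hC s
  refine Summable.tsum_le_tsum (fun t => ?_) he hrhs
  refine mul_le_mul_of_nonneg_left ?_ (pow_nonneg hγ0' t)
  refine Finset.sum_le_sum fun s _ => ?_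
  refine mul_le_mul_of_nonneg_left ?_ (stateDist_nonneg p hp_nonneg _ s0 t s)
  have h1 : Qπstar s (πstar s) = r s (πstar s) + γ * ∑ s' : S, p s (πstar s) s' * V s' :=
    hQπstar s (πstar s)
  have h2 : V s = r s (πstar s) + γ * ∑ s' : S, p s (πstar s) s' * V s' :=
    value_bellman p r hp_nonneg hp_sum hγ0' hγ1 hr πstar s
  have h3 : Qπstar s (πhat s) = r s (πhat s) + γ * ∑ s' : S, p s (πhat s) s' * V s' :=
    hQπstar s (πhat s)
  have habs1 := le_abs_self (Qπstar s (πstar s) - Q s (πstar s))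
  have habs2 := neg_abs_le (Qπstar s (πhat s) - Q s (πhat s))
  have hg := hgreedy s (πstar s)
  linarith
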